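/- arXiv:2207.03619 — 5 statements merged into one kernel-verified Lean document; each statement's English description precedes it below -/
import Mathlib

section
/- Let ℓ ≥ 1 and n ≥ 2 be integers and let a, b be integers. Let S be an ℓ×n matrix with entries in {1,−1} whose first column is the all-ones vector 𝟙 and which satisfies S𝟙 = 0, and write S = (𝟙 | J − 2X), where J is the ℓ×(n−1) all-ones matrix, so that X is an ℓ×(n−1) matrix with entries in {0,1}. Then the following are equivalent: (1) SSᵀ = n·I_ℓ and the dot product of every two distinct columns of S lies in {a,b}; (2) every two distinct rows of X have dot product equal to n/4, every column sum of X lies in {(ℓ−a)/2, (ℓ−b)/2}, and every two distinct columns of X have dot product lying in {(ℓ−a)/4, (ℓ−b)/4, (ℓ+a−2b)/4, (ℓ+b−2a)/4} (all equalities read as equalities of rational numbers). -/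
/-!
For a frame `S * Sᵀ = c • 1` with zero row sums, the Gram matrix `G = Sᵀ * S` satisfies
`G * G = c • G` and has zero row sums, so for every column `j` the sum
`∑ k, (G j k - a) * (G j k - b)` equals `c * G j j + n * a * b`. With constant diagonal this does
not depend on `j`. Writing `S = (𝟙 | J - 2X)`, the entries of `G` are affine in the column sums
and column dot products of `X`, and condition (2) says that the first column of `G` takes values
in `{a, b}` while every other off-diagonal entry lies in `{a, b, 2a - b, 2b - a, 3a - 2b, 3b - 2a}`,
hence never strictly between `a` and `b`. On the first column the sum reduces to its diagonal
term; so in every column the off-diagonal terms are nonnegative with sum zero, i.e. all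
off-diagonal entries of `G` are `a` or `b`.
-/

open Matrix Finset

section Gram

variable {R ι κ : Type*} [Fintype ι]

theorem Matrix.transpose_mul_self_apply_comm [CommRing R] (S : Matrix ι κ R) (j k : κ) :
    (Sᵀ * S) j k = (Sᵀ * S) k j := by
  simp only [mul_apply, transpose_apply, mul_comm]

theorem Matrix.transpose_mul_self_mul_self_of_mul_transpose_eq [Fintype κ] [CommRing R]
    [DecidableEq ι] {S : Matrix ι κ R} {c : R} (hframe : S * Sᵀ = c • 1) :
    (Sᵀ * S) * (Sᵀ * S) = c • (Sᵀ * S) := by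
  rw [Matrix.mul_assoc, ← Matrix.mul_assoc S, hframe, Matrix.smul_mul, Matrix.one_mul,
    Matrix.mul_smul]

theorem Matrix.sum_transpose_mul_self_apply [Fintype κ] [CommRing R] {S : Matrix ι κ R}
    (hrow : ∀ i, ∑ j, S i j = 0) (j : κ) : ∑ k, (Sᵀ * S) j k = 0 := by
  simp only [mul_apply, transpose_apply]
  rw [sum_comm]
  simp [← mul_sum, hrow]

theorem Matrix.sum_transpose_mul_self_sub_mul_sub [Fintype κ] [CommRing R] [DecidableEq ι]
    {S : Matrix ι κ R} {c : R} (hframe : S * Sᵀ = c • 1) (hrow : ∀ i, ∑ j, S i j = 0)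
    (a b : R) (j : κ) :
    ∑ k, ((Sᵀ * S) j k - a) * ((Sᵀ * S) j k - b) =
      c * (Sᵀ * S) j j + Fintype.card κ * (a * b) := by
  have hsq : ∑ k, (Sᵀ * S) j k * (Sᵀ * S) j k = c * (Sᵀ * S) j j := by
    calc ∑ k, (Sᵀ * S) j k * (Sᵀ * S) j k = ((Sᵀ * S) * (Sᵀ * S)) j j := by
          rw [mul_apply]
          exact sum_congr rfl fun k _ => by rw [transpose_mul_self_apply_comm S k j]
      _ = c * (Sᵀ * S) j j := by
          rw [transpose_mul_self_mul_self_of_mul_transpose_eq hframe, smul_apply, smul_eq_mul]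
  calc ∑ k, ((Sᵀ * S) j k - a) * ((Sᵀ * S) j k - b)
      = ∑ k, ((Sᵀ * S) j k * (Sᵀ * S) j k - (a + b) * (Sᵀ * S) j k + a * b) :=
        sum_congr rfl fun _ _ => by ring
    _ = c * (Sᵀ * S) j j + Fintype.card κ * (a * b) := by
        simp [sum_add_distrib, sum_sub_distrib, ← mul_sum, hsq,
          sum_transpose_mul_self_apply hrow]

theorem Matrix.transpose_mul_self_apply_mem_pair [Fintype κ] [CommRing R] [LinearOrder R]
    [IsStrictOrderedRing R] [DecidableEq ι] {S : Matrix ι κ R} {c d a b : R}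
    (hframe : S * Sᵀ = c • 1) (hrow : ∀ i, ∑ j, S i j = 0) (hdiag : ∀ j, (Sᵀ * S) j j = d)
    (hout : ∀ j k, j ≠ k → 0 ≤ ((Sᵀ * S) j k - a) * ((Sᵀ * S) j k - b))
    (j₀ : κ) (hj₀ : ∀ k, k ≠ j₀ → (Sᵀ * S) j₀ k = a ∨ (Sᵀ * S) j₀ k = b)
    {j k : κ} (hjk : j ≠ k) : (Sᵀ * S) j k = a ∨ (Sᵀ * S) j k = b := by
  classical
  have hoff : ∀ j, ∑ k ∈ univ.erase j, ((Sᵀ * S) j k - a) * ((Sᵀ * S) j k - b) =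
      c * d + Fintype.card κ * (a * b) - (d - a) * (d - b) := fun j => by
    rw [sum_erase_eq_sub (mem_univ j), sum_transpose_mul_self_sub_mul_sub hframe hrow, hdiag]
  have hoff₀ : ∑ k ∈ univ.erase j₀, ((Sᵀ * S) j₀ k - a) * ((Sᵀ * S) j₀ k - b) = 0 :=
    sum_eq_zero fun k hk => by
      rcases hj₀ k (ne_of_mem_erase hk) with h | h <;> simp [h]
  have hzero : ∀ k' ∈ univ.erase j, ((Sᵀ * S) j k' - a) * ((Sᵀ * S) j k' - b) = 0 :=
    (sum_eq_zero_iff_of_nonneg fun k hk => hout j k (ne_of_mem_erase hk).symm).1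
      ((hoff j).trans ((hoff j₀).symm.trans hoff₀))
  simpa only [mul_eq_zero, sub_eq_zero] using hzero k (mem_erase.2 ⟨hjk.symm, mem_univ k⟩)

theorem Finset.sum_one_sub_two_mul_mul_one_sub_two_mul [CommRing R] (u v : ι → R) :
    ∑ i, (1 - 2 * u i) * (1 - 2 * v i) =
      Fintype.card ι - 2 * ∑ i, u i - 2 * ∑ i, v i + 4 * ∑ i, u i * v i := by
  calc ∑ i, (1 - 2 * u i) * (1 - 2 * v i)
      = ∑ i, (1 - 2 * u i - 2 * v i + 4 * (u i * v i)) := sum_congr rfl fun _ _ => by ring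
    _ = _ := by simp [sum_add_distrib, sum_sub_distrib, ← mul_sum]

end Gram

section FirstColumnOnes

variable {ℓ m : ℕ} {S : Matrix (Fin ℓ) (Fin (m + 1)) ℤ} {X : Matrix (Fin ℓ) (Fin m) ℤ}

theorem transpose_mul_self_zero_succ (hcol0 : ∀ i, S i 0 = 1)
    (hX : ∀ i (j : Fin m), S i j.succ = 1 - 2 * X i j) (j : Fin m) :
    (Sᵀ * S) 0 j.succ = ℓ - 2 * ∑ i, X i j := by
  simp [mul_apply, hcol0, hX, sum_sub_distrib, ← mul_sum]

theorem transpose_mul_self_succ_succ (hX : ∀ i (j : Fin m), S i j.succ = 1 - 2 * X i j)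
    (j k : Fin m) :
    (Sᵀ * S) j.succ k.succ = ℓ - 2 * ∑ i, X i j - 2 * ∑ i, X i k + 4 * ∑ i, X i j * X i k := by
  simp only [mul_apply, transpose_apply, hX]
  simpa using sum_one_sub_two_mul_mul_one_sub_two_mul (fun i => X i j) (fun i => X i k)

theorem two_mul_sum_row (hcol0 : ∀ i, S i 0 = 1) (hrow : ∀ i, ∑ j, S i j = 0)
    (hX : ∀ i (j : Fin m), S i j.succ = 1 - 2 * X i j) (i : Fin ℓ) :
    2 * ∑ j, X i j = m + 1 := by
  have h := hrow i
  simp only [Fin.sum_univ_succ, hcol0, hX, sum_sub_distrib, ← mul_sum, sum_const, card_univ,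
    Fintype.card_fin, nsmul_eq_mul, mul_one] at h
  linarith

theorem mul_transpose_apply_eq (hcol0 : ∀ i, S i 0 = 1) (hrow : ∀ i, ∑ j, S i j = 0)
    (hX : ∀ i (j : Fin m), S i j.succ = 1 - 2 * X i j) (i i' : Fin ℓ) :
    (S * Sᵀ) i i' = 4 * ∑ j, X i j * X i' j - (m + 1) := by
  have h := sum_one_sub_two_mul_mul_one_sub_two_mul (X i) (X i')
  simp only [mul_apply, transpose_apply, Fin.sum_univ_succ, hcol0, hX]
  simp only [Fintype.card_fin] at h
  linarith [two_mul_sum_row hcol0 hrow hX i, two_mul_sum_row hcol0 hrow hX i']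

theorem transpose_mul_self_apply_self (hS : ∀ i j, S i j = 1 ∨ S i j = -1) (j : Fin (m + 1)) :
    (Sᵀ * S) j j = ℓ := by
  simp [mul_apply, mul_self_eq_one_iff.2 (hS _ _)]

theorem mul_transpose_eq_smul_one_iff (hS : ∀ i j, S i j = 1 ∨ S i j = -1)
    (hcol0 : ∀ i, S i 0 = 1) (hrow : ∀ i, ∑ j, S i j = 0)
    (hX : ∀ i (j : Fin m), S i j.succ = 1 - 2 * X i j) :
    S * Sᵀ = ((m + 1 : ℕ) : ℤ) • 1 ↔
      ∀ i i', i ≠ i' → (∑ j, X i j * X i' j) * 4 = ((m + 1 : ℕ) : ℤ) := by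
  constructor
  · intro h i i' hii'
    have := congrFun (congrFun h i) i'
    rw [mul_transpose_apply_eq hcol0 hrow hX, Matrix.smul_apply, one_apply_ne hii',
      smul_zero] at this
    push_cast at this ⊢
    linarith
  · intro h
    ext i i'
    rcases eq_or_ne i i' with rfl | hii'
    · simp [mul_apply, mul_self_eq_one_iff.2 (hS _ _)]
    · rw [mul_transpose_apply_eq hcol0 hrow hX, Matrix.smul_apply, one_apply_ne hii', smul_zero]
      push_cast at h ⊢
      linarith [h i i' hii']

theorem transpose_mul_self_apply_mem_pair_of_sum_cols (hS : ∀ i j, S i j = 1 ∨ S i j = -1)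
    (hcol0 : ∀ i, S i 0 = 1) (hrow : ∀ i, ∑ j, S i j = 0)
    (hX : ∀ i (j : Fin m), S i j.succ = 1 - 2 * X i j)
    (hframe : S * Sᵀ = ((m + 1 : ℕ) : ℤ) • 1) {a b : ℤ}
    (hcols : ∀ j, (∑ i, X i j) * 2 = ℓ - a ∨ (∑ i, X i j) * 2 = ℓ - b)
    (hdots : ∀ j k, j ≠ k →
      (∑ i, X i j * X i k) * 4 = ℓ - a ∨ (∑ i, X i j * X i k) * 4 = ℓ - b ∨
      (∑ i, X i j * X i k) * 4 = ℓ + a - 2 * b ∨ (∑ i, X i j * X i k) * 4 = ℓ + b - 2 * a)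
    {j k : Fin (m + 1)} (hjk : j ≠ k) : (Sᵀ * S) j k = a ∨ (Sᵀ * S) j k = b := by
  have hG0 := transpose_mul_self_zero_succ hcol0 hX
  have hGs := transpose_mul_self_succ_succ hX
  refine transpose_mul_self_apply_mem_pair hframe hrow (transpose_mul_self_apply_self hS)
    (fun j k hjk => mul_nonneg_iff.2 ?_) 0 (fun k hk => ?_) hjk
  · rcases Fin.eq_zero_or_eq_succ j with rfl | ⟨j, rfl⟩ <;>
      rcases Fin.eq_zero_or_eq_succ k with rfl | ⟨k, rfl⟩
    · exact absurd rfl hjk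
    · rw [hG0]; have := hcols k; omega
    · rw [transpose_mul_self_apply_comm, hG0]; have := hcols j; omega
    · have hjk' : j ≠ k := fun h => hjk (congrArg Fin.succ h)
      rw [hGs]; have := hcols j; have := hcols k; have := hdots j k hjk'; omega
  · obtain ⟨k, rfl⟩ := Fin.exists_succ_eq.2 hk
    rw [hG0]; have := hcols k; omega

end FirstColumnOnes

theorem stmt1_general {ℓ m : ℕ} (a b : ℤ)
    (S : Matrix (Fin ℓ) (Fin (m + 1)) ℤ)
    (hS : ∀ i j, S i j = 1 ∨ S i j = -1)
    (hcol0 : ∀ i, S i 0 = 1)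
    (hrowsum : ∀ i, ∑ j, S i j = 0)
    (X : Matrix (Fin ℓ) (Fin m) ℤ)
    (hX : ∀ i (j : Fin m), S i j.succ = 1 - 2 * X i j) :
    ((S * Sᵀ = ((m + 1 : ℕ) : ℤ) • 1) ∧
      (∀ j k : Fin (m + 1), j ≠ k →
        (∑ i, S i j * S i k) = a ∨ (∑ i, S i j * S i k) = b))
    ↔
    ((∀ i i' : Fin ℓ, i ≠ i' →
        ((∑ j, X i j * X i' j : ℤ) : ℚ) = ((m : ℚ) + 1) / 4) ∧
     (∀ j : Fin m,
        ((∑ i, X i j : ℤ) : ℚ) = ((ℓ : ℚ) - (a : ℚ)) / 2 ∨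
        ((∑ i, X i j : ℤ) : ℚ) = ((ℓ : ℚ) - (b : ℚ)) / 2) ∧
     (∀ j k : Fin m, j ≠ k →
        ((∑ i, X i j * X i k : ℤ) : ℚ) = ((ℓ : ℚ) - (a : ℚ)) / 4 ∨
        ((∑ i, X i j * X i k : ℤ) : ℚ) = ((ℓ : ℚ) - (b : ℚ)) / 4 ∨
        ((∑ i, X i j * X i k : ℤ) : ℚ) = ((ℓ : ℚ) + (a : ℚ) - 2 * (b : ℚ)) / 4 ∨
        ((∑ i, X i j * X i k : ℤ) : ℚ) = ((ℓ : ℚ) + (b : ℚ) - 2 * (a : ℚ)) / 4)) := by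
  rw [mul_transpose_eq_smul_one_iff hS hcol0 hrowsum hX]
  have hgram : ∀ j k, ∑ i, S i j * S i k = (Sᵀ * S) j k := fun _ _ => rfl
  simp only [eq_div_iff (four_ne_zero' ℚ), eq_div_iff (two_ne_zero' ℚ), hgram]
  norm_cast
  have hG0 := transpose_mul_self_zero_succ hcol0 hX
  have hGs := transpose_mul_self_succ_succ hX
  constructor
  · rintro ⟨hrows, hpair⟩
    refine ⟨hrows, fun j => ?_, fun j k hjk => ?_⟩
    · have h0j := hpair 0 j.succ (Fin.succ_ne_zero j).symm
      rw [hG0] at h0j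
      omega
    · have h0j := hpair 0 j.succ (Fin.succ_ne_zero j).symm
      have h0k := hpair 0 k.succ (Fin.succ_ne_zero k).symm
      have hjk' := hpair j.succ k.succ ((Fin.succ_injective _).ne hjk)
      rw [hG0] at h0j h0k
      rw [hGs] at hjk'
      omega
  · rintro ⟨hrows, hcols, hdots⟩
    have hframe := (mul_transpose_eq_smul_one_iff hS hcol0 hrowsum hX).2 hrows
    exact ⟨hrows, fun j k hjk => transpose_mul_self_apply_mem_pair_of_sum_cols hS hcol0 hrowsum hX
      hframe hcols hdots hjk⟩

theorem stmt1 {ℓ m : ℕ} (hℓ : 1 ≤ ℓ) (hm : 1 ≤ m) (a b : ℤ)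
    (S : Matrix (Fin ℓ) (Fin (m + 1)) ℤ)
    (hS : ∀ i j, S i j = 1 ∨ S i j = -1)
    (hcol0 : ∀ i, S i 0 = 1)
    (hrowsum : ∀ i, ∑ j, S i j = 0)
    (X : Matrix (Fin ℓ) (Fin m) ℤ)
    (hX : ∀ i (j : Fin m), S i j.succ = 1 - 2 * X i j) :
    ((S * Sᵀ = ((m + 1 : ℕ) : ℤ) • 1) ∧
      (∀ j k : Fin (m + 1), j ≠ k →
        (∑ i, S i j * S i k) = a ∨ (∑ i, S i j * S i k) = b))
    ↔
    ((∀ i i' : Fin ℓ, i ≠ i' →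
        ((∑ j, X i j * X i' j : ℤ) : ℚ) = ((m : ℚ) + 1) / 4) ∧
     (∀ j : Fin m,
        ((∑ i, X i j : ℤ) : ℚ) = ((ℓ : ℚ) - (a : ℚ)) / 2 ∨
        ((∑ i, X i j : ℤ) : ℚ) = ((ℓ : ℚ) - (b : ℚ)) / 2) ∧
     (∀ j k : Fin m, j ≠ k →
        ((∑ i, X i j * X i k : ℤ) : ℚ) = ((ℓ : ℚ) - (a : ℚ)) / 4 ∨
        ((∑ i, X i j * X i k : ℤ) : ℚ) = ((ℓ : ℚ) - (b : ℚ)) / 4 ∨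
        ((∑ i, X i j * X i k : ℤ) : ℚ) = ((ℓ : ℚ) + (a : ℚ) - 2 * (b : ℚ)) / 4 ∨
        ((∑ i, X i j * X i k : ℤ) : ℚ) = ((ℓ : ℚ) + (b : ℚ) - 2 * (a : ℚ)) / 4)) :=
  stmt1_general a b S hS hcol0 hrowsum X hX
end

section
/- Suppose H = (H₁; H₂) is a nontrivial BSHM(n,ℓ,a,−a) with respect to H₁ (so 1 < ℓ < n−1). Then a ≠ 0, and: (1) n(ℓ − a²) = ℓ² − a²; (2) a is even, a divides ℓ with ℓ/a an odd integer, and 4a divides n. -/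
open Matrix

/-- A Hadamard matrix of order `n`: entries in `{1,-1}` and `Hᵀ * H = n • 1`. -/
def IsHadamard {n : ℕ} (H : Matrix (Fin n) (Fin n) ℤ) : Prop :=
  (∀ i j, H i j = 1 ∨ H i j = -1) ∧ Hᵀ * H = (n : ℤ) • 1

/-- Dot product of columns `j` and `k` of the submatrix of `H` formed by the rows in `R`. -/
def colDot {n : ℕ} (H : Matrix (Fin n) (Fin n) ℤ) (R : Finset (Fin n)) (j k : Fin n) : ℤ :=
  ∑ i ∈ R, H i j * H i k

/-- `H` is a balanced splittable Hadamard matrix with respect to the submatrix formed by the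
rows in `R`, with values `a, b`. -/
def IsBSHM {n : ℕ} (H : Matrix (Fin n) (Fin n) ℤ) (R : Finset (Fin n)) (a b : ℤ) : Prop :=
  _root_.IsHadamard H ∧ ∀ j k : Fin n, j ≠ k → colDot H R j k = a ∨ colDot H R j k = b

/-!
Let `G` be the Gram matrix of the columns of `H₁` (entries `colDot H R`): its diagonal is `ℓ`,
its other entries are `±a`, and `G = Hᵀ P H` with `P` the projection onto the rows of `H₁`.
Since `H Hᵀ = n I`, we get `G² = n G` and `H G = n P H`.

The diagonal of `G² = n G` reads `ℓ² + (n - 1) a² = n ℓ`. Entry `(i, j)` of `H G = n P H`,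
multiplied by `H i j`, reads `ℓ + (n - 1 terms ±a) = n [i ∈ H₁]`; as the order `n` of a
Hadamard matrix is even, `ℓ = a s` and `n - ℓ = a t` with `s, t` odd. Then `s t = n - 1`,
i.e. `s t + 1 = a (s + t)`, and for even `a` this forces `4 ∣ s + t`, so `4 a ∣ a (s + t) = n`.

If `a` were odd: each row of `H₁` contributes `0` or `4` to `ℓ + G j k + G j m + G m k`, so
`G j m + G m k` is fixed mod 4 and `G j m * G m k` does not depend on `m ∉ {j, k}`. Entry
`(j, k)` of `G² = n G` then gives `(n - 2ℓ)² = (n - 2)² a²`, which together with the first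
identity leaves only `ℓ = 1` or `ℓ = n - 1`.
-/

open Finset

theorem Finset.sum_eq_sum_add_card_compl_mul {ι : Type*} [Fintype ι] [DecidableEq ι]
    (t : Finset ι) {f : ι → ℤ} {p : ℤ} (hf : ∀ m ∉ t, f m = p) :
    ∑ m, f m = ∑ m ∈ t, f m + (Fintype.card ι - #t) * p := by
  rw [← sum_compl_add_sum t, sum_congr rfl fun m hm => hf m (mem_compl.mp hm), sum_const,
    card_compl, nsmul_eq_mul, Nat.cast_sub (card_le_univ t)]
  ring

theorem Finset.exists_sum_eq_mul_modEq_card {ι : Type*} {s : Finset ι} {f : ι → ℤ} {a : ℤ}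
    (h : ∀ k ∈ s, f k = a ∨ f k = -a) :
    ∃ m, ∑ k ∈ s, f k = a * m ∧ m ≡ #s [ZMOD 2] := by
  classical
  refine ⟨∑ k ∈ s, if f k = a then 1 else -1, ?_, ?_⟩
  · rw [mul_sum]
    refine sum_congr rfl fun k hk => ?_
    split_ifs with hka
    · rw [hka, mul_one]
    · rw [(h k hk).resolve_left hka, mul_neg_one]
  · rw [Int.modEq_iff_dvd, card_eq_sum_ones, Nat.cast_sum, ← sum_sub_distrib]
    exact dvd_sum fun k _ => by split_ifs <;> norm_num

theorem IsHadamard.isHadamard {n : ℕ} {H : Matrix (Fin n) (Fin n) ℤ}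
    (hH : _root_.IsHadamard H) : H.IsHadamard := by
  rcases n.eq_zero_or_pos with rfl | hn
  · exact ⟨fun i => i.elim0, Subsingleton.elim _ _, Subsingleton.elim _ _⟩
  refine (IsHadamard.of_mul_conjTranspose (A := Hᵀ) (fun i j => ?_) ?_ ?_).transpose
  · exact Unitary.mem_iff_eq_one_or_eq_neg_one.mpr (hH.1 j i)
  · rw [conjTranspose_eq_transpose_of_trivial, transpose_transpose, hH.2, Fintype.card_fin]
  · rw [Fintype.card_fin]
    exact IsRegular.of_ne_zero (by positivity)

namespace Matrix

variable {ι α : Type*} [Fintype ι] [DecidableEq ι]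

theorem IsHadamard.mul_transpose [Semiring α] [StarRing α] [TrivialStar α] {A : Matrix ι ι α}
    (hA : A.IsHadamard) : A * Aᵀ = (Fintype.card ι : α) • 1 := by
  simpa [conjTranspose_eq_transpose_of_trivial] using hA.mul_conjTranspose

variable [CommRing α] {A D : Matrix ι ι α} {c : α}

theorem transpose_mul_mul_mul_self (hA : A * Aᵀ = c • 1) (hD : D * D = D) :
    (Aᵀ * D * A) * (Aᵀ * D * A) = c • (Aᵀ * D * A) := by
  calc (Aᵀ * D * A) * (Aᵀ * D * A) = Aᵀ * D * (A * Aᵀ) * D * A := by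
        simp only [Matrix.mul_assoc]
    _ = c • (Aᵀ * (D * D) * A) := by simp [hA, Matrix.mul_assoc]
    _ = c • (Aᵀ * D * A) := by rw [hD]

theorem mul_transpose_mul_mul (hA : A * Aᵀ = c • 1) :
    A * (Aᵀ * D * A) = c • (D * A) := by
  simp [← Matrix.mul_assoc, hA]

end Matrix

section ColDot

variable {n : ℕ} {H : Matrix (Fin n) (Fin n) ℤ}

def rowProjection (R : Finset (Fin n)) : Matrix (Fin n) (Fin n) ℤ :=
  diagonal fun i => if i ∈ R then 1 else 0

theorem rowProjection_mul_self (R : Finset (Fin n)) :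
    rowProjection R * rowProjection R = rowProjection R := by
  simp [rowProjection, diagonal_mul_diagonal]

theorem colDot_eq_mul_apply (R : Finset (Fin n)) (j k : Fin n) :
    colDot H R j k = (Hᵀ * rowProjection R * H) j k := by
  simp [colDot, rowProjection, mul_apply, diagonal_apply, sum_ite_mem]

theorem colDot_comm (R : Finset (Fin n)) (j k : Fin n) : colDot H R j k = colDot H R k j := by
  simp only [colDot, mul_comm]

theorem Matrix.IsHadamard.sum_colDot_mul_colDot (hH : H.IsHadamard) (R : Finset (Fin n))
    (j k : Fin n) : ∑ m, colDot H R j m * colDot H R m k = n * colDot H R j k := by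
  have := transpose_mul_mul_mul_self hH.mul_transpose (rowProjection_mul_self R)
  simpa [colDot_eq_mul_apply, mul_apply] using congrFun (congrFun this j) k

theorem Matrix.IsHadamard.sum_mul_colDot (hH : H.IsHadamard) (R : Finset (Fin n))
    (i j : Fin n) : ∑ k, H i k * colDot H R k j = if i ∈ R then n * H i j else 0 := by
  have := mul_transpose_mul_mul (D := rowProjection R) hH.mul_transpose
  simpa [colDot_eq_mul_apply, rowProjection, mul_apply, diagonal_apply] using
    congrFun (congrFun this i) j

end ColDot

section PlusMinus

variable {n : ℕ} {H : Matrix (Fin n) (Fin n) ℤ}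

theorem colDot_self (hE : ∀ i j, H i j = 1 ∨ H i j = -1) (R : Finset (Fin n)) (j : Fin n) :
    colDot H R j j = #R := by
  rw [card_eq_sum_ones, Nat.cast_sum]
  exact sum_congr rfl fun i _ => by rcases hE i j with h | h <;> simp [h]

theorem four_dvd_card_add_colDot (hE : ∀ i j, H i j = 1 ∨ H i j = -1) (R : Finset (Fin n))
    (j k m : Fin n) : 4 ∣ (#R + colDot H R j k + colDot H R j m + colDot H R m k : ℤ) := by
  rw [card_eq_sum_ones, Nat.cast_sum]
  simp only [colDot, ← sum_add_distrib]
  refine dvd_sum fun i _ => ?_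
  rcases hE i j with h | h <;> rcases hE i k with h' | h' <;> rcases hE i m with h'' | h'' <;>
    norm_num [h, h', h'']

end PlusMinus

theorem mul_eq_or_eq_neg {a x y : ℤ} (hx : x = 1 ∨ x = -1) (hy : y = a ∨ y = -a) :
    x * y = a ∨ x * y = -a := by
  rcases hx with rfl | rfl <;> rcases hy with rfl | rfl <;> simp

theorem mul_eq_mul_of_four_dvd {a b x y x' y' : ℤ} (ha : Odd a) (hx : x = a ∨ x = -a)
    (hy : y = a ∨ y = -a) (hx' : x' = a ∨ x' = -a) (hy' : y' = a ∨ y' = -a)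
    (h : 4 ∣ b + x + y) (h' : 4 ∣ b + x' + y') : x * y = x' * y' := by
  obtain ⟨c, rfl⟩ := ha
  rcases hx with rfl | rfl <;> rcases hy with rfl | rfl <;> rcases hx' with rfl | rfl <;>
    rcases hy' with rfl | rfl <;> first | ring1 | (exfalso; omega)

theorem eq_one_or_eq_sub_one_of_sq_sub_eq {n ℓ a : ℤ} (hn : n ≠ 0)
    (h₁ : n * (ℓ - a ^ 2) = ℓ ^ 2 - a ^ 2) (h₂ : (n - 2 * ℓ) ^ 2 = (n - 2) ^ 2 * a ^ 2) :
    ℓ = 1 ∨ ℓ = n - 1 := by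
  have ha : a ^ 2 = 1 := by
    have : n ^ 2 * (a ^ 2 - 1) = 0 := by linear_combination -h₂ - 4 * h₁
    simpa [hn, sub_eq_zero] using this
  have : 4 * ((1 - ℓ) * (n - ℓ - 1)) = 0 := by linear_combination h₂ + (n - 2) ^ 2 * ha
  rcases mul_eq_zero.mp ((mul_eq_zero.mp this).resolve_left four_ne_zero) with h | h
  · left; linarith
  · right; linarith

theorem four_dvd_add_of_mul_add_one_eq {a s t : ℤ} (hs : Odd s) (ht : Odd t) (ha : Even a)
    (h : s * t + 1 = a * (s + t)) : 4 ∣ s + t := by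
  obtain ⟨s', rfl⟩ := hs
  obtain ⟨t', rfl⟩ := ht
  obtain ⟨a', rfl⟩ := ha
  exact ⟨a' * (s' + t' + 1) - s' * t', by linear_combination h⟩

namespace IsBSHM

variable {n : ℕ} {H : Matrix (Fin n) (Fin n) ℤ} {R : Finset (Fin n)} {a : ℤ}

theorem sq_colDot (h : IsBSHM H R a (-a)) {j k : Fin n} (hjk : j ≠ k) :
    colDot H R j k ^ 2 = a ^ 2 := by
  rcases h.2 j k hjk with e | e <;> simp [e]

theorem card_mul_sub_sq (h : IsBSHM H R a (-a)) (hn : 0 < n) :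
    (n : ℤ) * (#R - a ^ 2) = #R ^ 2 - a ^ 2 := by
  let j : Fin n := ⟨0, hn⟩
  have hG := h.1.isHadamard.sum_colDot_mul_colDot R j j
  rw [sum_eq_sum_add_card_compl_mul {j} (p := a ^ 2) fun m hm => by
      rw [colDot_comm R m j, ← sq, h.sq_colDot (Ne.symm (mem_singleton.not.mp hm))],
    sum_singleton, colDot_self h.1.1, card_singleton, Fintype.card_fin] at hG
  linear_combination -hG

theorem ne_zero (h : IsBSHM H R a (-a)) (hR₀ : 0 < #R) (hRn : #R < n) : a ≠ 0 := by
  rintro rfl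
  have := h.card_mul_sub_sq (hR₀.trans hRn)
  have : (#R : ℤ) * (n - #R) = 0 := by linear_combination this
  rcases mul_eq_zero.mp this with h | h <;> omega

theorem even (h : IsBSHM H R a (-a)) (hR₁ : 1 < #R) (hRn : #R + 1 < n) : Even a := by
  by_contra ha
  rw [Int.not_even_iff_odd] at ha
  have hE := h.1.1
  obtain ⟨j, k, m₀, hjk, hjm₀, hkm₀⟩ := Fintype.two_lt_card_iff.mp
    (by rw [Fintype.card_fin]; omega : 2 < Fintype.card (Fin n))
  have hconst : ∀ m ∉ ({j, k} : Finset (Fin n)),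
      colDot H R j m * colDot H R m k = colDot H R j m₀ * colDot H R m₀ k := by
    intro m hm
    simp only [mem_insert, mem_singleton, not_or] at hm
    exact mul_eq_mul_of_four_dvd ha (h.2 j m (Ne.symm hm.1)) (h.2 m k hm.2) (h.2 j m₀ hjm₀)
      (h.2 m₀ k hkm₀.symm) (four_dvd_card_add_colDot hE R j k m)
      (four_dvd_card_add_colDot hE R j k m₀)
  have hG := h.1.isHadamard.sum_colDot_mul_colDot R j k
  rw [sum_eq_sum_add_card_compl_mul _ hconst, sum_pair hjk, colDot_self hE, colDot_self hE,
    card_pair hjk, Fintype.card_fin] at hG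
  have hlin : ((n : ℤ) - 2 * #R) * colDot H R j k =
      (n - 2) * (colDot H R j m₀ * colDot H R m₀ k) := by
    push_cast at hG
    linear_combination -hG
  have hsq := congrArg (· ^ 2) hlin
  simp only [mul_pow, h.sq_colDot hjk, h.sq_colDot hjm₀, h.sq_colDot hkm₀.symm] at hsq
  have ha₀ : a ^ 2 ≠ 0 := pow_ne_zero 2 (by rintro rfl; simp at ha)
  rcases eq_one_or_eq_sub_one_of_sq_sub_eq (by omega) (h.card_mul_sub_sq (by omega))
    (mul_right_cancel₀ ha₀ (by linear_combination hsq)) with h | h <;> omega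

theorem exists_odd_mul (h : IsBSHM H R a (-a)) (hn : Even n) (i : Fin n) :
    ∃ m, (if i ∈ R then (n : ℤ) else 0) - #R = a * m ∧ Odd m := by
  let j : Fin n := ⟨0, i.pos⟩
  have hE := h.1.1
  have hsq : H i j * H i j = 1 := by rcases hE i j with e | e <;> simp [e]
  have hrow : ∑ k, H i j * H i k * colDot H R k j = if i ∈ R then (n : ℤ) else 0 := by
    simp_rw [mul_assoc, ← mul_sum, h.1.isHadamard.sum_mul_colDot]
    split_ifs
    · linear_combination (n : ℤ) * hsq
    · rw [mul_zero]
  rw [← add_sum_erase _ _ (mem_univ j), hsq, one_mul, colDot_self hE] at hrow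
  obtain ⟨m, hm, hmod⟩ := exists_sum_eq_mul_modEq_card (s := univ.erase j)
    (f := fun k => H i j * H i k * colDot H R k j) fun k hk =>
      mul_eq_or_eq_neg (mul_eq_or_eq_neg (hE i j) (hE i k)) (h.2 k j (ne_of_mem_erase hk))
  rw [card_erase_of_mem (mem_univ j), card_univ, Fintype.card_fin] at hmod
  refine ⟨m, by linarith, ?_⟩
  have := i.pos
  obtain ⟨r, rfl⟩ := hn
  rw [Int.odd_iff]
  unfold Int.ModEq at hmod
  omega

end IsBSHM

theorem stmt4 {n ℓ : ℕ} (a : ℤ) (H : Matrix (Fin n) (Fin n) ℤ)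
    (R : Finset (Fin n)) (hR : R.card = ℓ) (h1 : 1 < ℓ) (h2 : ℓ < n - 1)
    (hbshm : IsBSHM H R a (-a)) :
    a ≠ 0 ∧
    (n : ℤ) * ((ℓ : ℤ) - a ^ 2) = (ℓ : ℤ) ^ 2 - a ^ 2 ∧
    2 ∣ a ∧ a ∣ (ℓ : ℤ) ∧ Odd ((ℓ : ℤ) / a) ∧ (4 * a) ∣ (n : ℤ) := by
  subst hR
  have ha₀ := hbshm.ne_zero (by omega) (by omega)
  have hcard := hbshm.card_mul_sub_sq (by omega)
  have ha := hbshm.even h1 (by omega)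
  have h4 : 4 ∣ n := by simpa using hbshm.1.isHadamard.four_dvd_card (by simp; omega)
  have hn : Even n := even_iff_two_dvd.mpr ((by norm_num : 2 ∣ 4).trans h4)
  obtain ⟨i₀, -, hi₀⟩ :=
    exists_mem_notMem_of_card_lt_card (s := R) (t := univ) (by simp; omega)
  obtain ⟨i₁, hi₁⟩ : ∃ i, i ∈ R := card_pos.mp (by omega)
  obtain ⟨s, hs, hs_odd⟩ := hbshm.exists_odd_mul hn i₀
  obtain ⟨t, ht, ht_odd⟩ := hbshm.exists_odd_mul hn i₁
  rw [if_neg hi₀] at hs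
  rw [if_pos hi₁] at ht
  have hst : -s * t + 1 = a * (-s + t) := by
    refine mul_left_cancel₀ (pow_ne_zero 2 ha₀) ?_
    linear_combination hcard + (a * t - a ^ 2) * hs + (a ^ 2 - #R) * ht
  refine ⟨ha₀, hcard, even_iff_two_dvd.mp ha, ⟨-s, by linarith⟩, ?_, ?_⟩
  · rw [show (#R : ℤ) = a * -s by linarith, Int.mul_ediv_cancel_left _ ha₀]
    exact hs_odd.neg
  · obtain ⟨w, hw⟩ := four_dvd_add_of_mul_add_one_eq hs_odd.neg ht_odd ha hst
    exact ⟨w, by linear_combination ht - hs + a * hw⟩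
end

section
/- Let H be a Hadamard matrix of order n one of whose rows is the all-ones row 𝟙ᵀ. (3) Suppose H = (H₁; 𝟙ᵀ; H₂), where H₁ has ℓ rows, and H is a nontrivial BSHM(n,ℓ,a,−a) with respect to H₁. Then H₁𝟙 = 0; k_a(i) (defined with respect to H₁) is a constant independent of i; and the associated graph of H with respect to H₁ is strongly regular with parameters (v,k,λ,μ) = (n, ((n−1)a−ℓ)/(2a), (n−4)/4 + (n−4ℓ)/(4a), n(a−1)/(4a)). (4) Suppose instead H = (H₁; 𝟙ᵀ; H₂), where H₁ has ℓ−1 rows, and H is a nontrivial BSHM(n,ℓ,a,−a) with respect to the ℓ×n submatrix (H₁; 𝟙ᵀ). Then H₂𝟙 = 0; k_a(i) (defined with respect to (H₁; 𝟙ᵀ)) is a constant independent of i; and the associated graph of H with respect to (H₁; 𝟙ᵀ) is strongly regular with parameters (v,k,λ,μ) = (n, ((n−1)a+n−ℓ)/(2a), (n−4)/4 + (3n−4ℓ)/(4a), n(a+1)/(4a)). -/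
open Matrix Finset

/-- `kA H R a i` is the number of columns `j ≠ i` whose dot product with column `i`
(in the submatrix with rows `R`) equals `a`. -/
def kA {n : ℕ} (H : Matrix (Fin n) (Fin n) ℤ) (R : Finset (Fin n)) (a : ℤ) (i : Fin n) : ℕ :=
  (univ.filter fun j => j ≠ i ∧ colDot H R i j = a).card

/-- The associated graph (vertices `Fin n`, with `i ~ j` iff `i ≠ j` and columns `i`, `j` of the
submatrix with rows `R` have dot product `a`) is strongly regular with parameters
`(v, k, lam, mu)`. -/
def AssociatedGraphIsSRG {n : ℕ} (H : Matrix (Fin n) (Fin n) ℤ) (R : Finset (Fin n)) (a : ℤ)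
    (v k lam mu : ℕ) : Prop :=
  n = v ∧
  (∀ i : Fin n, (univ.filter fun j => i ≠ j ∧ colDot H R i j = a).card = k) ∧
  (∀ i j : Fin n, i ≠ j → colDot H R i j = a →
    (univ.filter fun x =>
      (i ≠ x ∧ colDot H R i x = a) ∧ (j ≠ x ∧ colDot H R j x = a)).card = lam) ∧
  (∀ i j : Fin n, i ≠ j → colDot H R i j ≠ a →
    (univ.filter fun x =>
      (i ≠ x ∧ colDot H R i x = a) ∧ (j ≠ x ∧ colDot H R j x = a)).card = mu)

/-!
Let `M = H₁ᵀ H₁` be the Gram matrix of the columns of the distinguished rows, so `M` has diagonal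
`ℓ` and off-diagonal entries `±a`. Orthogonality of the rows of `H` gives `M² = n M`, and
orthogonality to the all-ones row makes the row sums of `M` constant, equal to `s = 0` or `s = n`
according as the all-ones row is among the distinguished rows. Off the diagonal, `M + a J` is `2a`
times the adjacency matrix `A` of the associated graph, so the row sums of `M + a J` compute the
degrees, and the entries of `(M + a J)² = n M + 2 a s J + n a² J` compute the numbers of common
neighbours, which therefore depend only on whether the two vertices are adjacent. Finally `a ≠ 0`,
since otherwise `ℓ² = n ℓ`.
-/

section SignedGram

variable {α : Type*} [Fintype α] {M : Matrix α α ℤ} {d a s m : ℤ}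

lemma ne_zero_of_mul_self_eq_smul [Nonempty α] (hdiag : ∀ i, M i i = d)
    (hoff : ∀ i j, i ≠ j → M i j = a ∨ M i j = -a) (hsq : M * M = m • M) (hd : d ≠ 0)
    (hdm : d ≠ m) : a ≠ 0 := by
  rintro rfl
  obtain ⟨i⟩ := ‹Nonempty α›
  have hzero : ∀ x, x ≠ i → M i x = 0 := fun x hx => by simpa using hoff i x hx.symm
  have hii := congr_fun (congr_fun hsq i) i
  rw [mul_apply, sum_eq_single i (fun x _ hx => by rw [hzero x hx, zero_mul]) (by simp), hdiag,
    Matrix.smul_apply, hdiag, smul_eq_mul] at hii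
  exact hdm (mul_right_cancel₀ hd hii)

variable [DecidableEq α]

lemma two_mul_card_adj (hdiag : ∀ i, M i i = d) (hoff : ∀ i j, i ≠ j → M i j = a ∨ M i j = -a)
    (hrow : ∀ i, ∑ x, M i x = s) (i : α) :
    2 * a * #{j | i ≠ j ∧ M i j = a} = s - d + a * (Fintype.card α - 1) := by
  have hpt : ∀ x, M i x + a =
      (if i ≠ x ∧ M i x = a then 2 * a else 0) + if i = x then d + a else 0 := by
    intro x
    by_cases hix : i = x
    · subst hix; simp [hdiag]
    · rcases hoff i x hix with h | h <;> split_ifs <;> grind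
  have hsum : ∑ x, (M i x + a) = s + Fintype.card α * a := by
    rw [sum_add_distrib, hrow, sum_const, card_univ, nsmul_eq_mul]
  rw [sum_congr rfl fun x _ => hpt x, sum_add_distrib, ← sum_filter, sum_const, sum_ite_eq,
    if_pos (mem_univ i), nsmul_eq_mul] at hsum
  linarith

lemma four_mul_sq_card_common (hdiag : ∀ i, M i i = d)
    (hoff : ∀ i j, i ≠ j → M i j = a ∨ M i j = -a) (hsymm : M.IsSymm)
    (hrow : ∀ i, ∑ x, M i x = s) (hsq : M * M = m • M) {i j : α} (hij : i ≠ j) :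
    4 * a ^ 2 * #{x | (i ≠ x ∧ M i x = a) ∧ (j ≠ x ∧ M j x = a)} =
      m * M i j + 2 * a * s + Fintype.card α * a ^ 2 - 2 * (d + a) * (M i j + a) := by
  have hpt : ∀ x, (M i x + a) * (M j x + a) =
      (if (i ≠ x ∧ M i x = a) ∧ (j ≠ x ∧ M j x = a) then 4 * a ^ 2 else 0) +
        (if i = x then (d + a) * (M i j + a) else 0) +
        if j = x then (d + a) * (M i j + a) else 0 := by
    intro x
    by_cases hix : i = x
    · subst hix; simp [hdiag, hij.symm, hsymm.apply i j]
    by_cases hjx : j = x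
    · subst hjx; simp [hdiag, hix]; ring
    rcases hoff i x hix with h | h <;> rcases hoff j x hjx with h' | h' <;> split_ifs <;> grind
  have hprod : ∑ x, M i x * M j x = m * M i j := by
    simpa [mul_apply, hsymm.apply] using congr_fun (congr_fun hsq i) j
  have hsum :
      ∑ x, (M i x + a) * (M j x + a) = m * M i j + 2 * a * s + Fintype.card α * a ^ 2 := by
    simp only [add_mul, mul_add, sum_add_distrib, ← sum_mul, ← mul_sum, hrow, hprod, sum_const,
      card_univ, nsmul_eq_mul]
    ring
  rw [sum_congr rfl fun x _ => hpt x, sum_add_distrib, sum_add_distrib, ← sum_filter, sum_const,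
    sum_ite_eq, sum_ite_eq, if_pos (mem_univ i), if_pos (mem_univ j), nsmul_eq_mul] at hsum
  linarith

lemma exists_adj_and_not_adj (hdiag : ∀ i, M i i = d)
    (hoff : ∀ i j, i ≠ j → M i j = a ∨ M i j = -a) (hrow : ∀ i, ∑ x, M i x = s) (ha : a ≠ 0)
    (hgap : |s - d| < Fintype.card α - 1) (i : α) :
    (∃ j, i ≠ j ∧ M i j = a) ∧ ∃ j, i ≠ j ∧ M i j ≠ a := by
  have hk := two_mul_card_adj hdiag hoff hrow i
  have hN : (0 : ℤ) < Fintype.card α - 1 := by linarith [abs_nonneg (s - d)]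
  have hgap' : Fintype.card α - 1 ≤ |a * (Fintype.card α - 1)| := by
    rw [abs_mul, abs_of_pos hN]
    exact le_mul_of_one_le_left hN.le (Int.one_le_abs ha)
  constructor
  · by_contra! hnone
    rw [filter_false_of_mem fun j _ => not_and.mpr (hnone j)] at hk
    rw [show s - d = -(a * (Fintype.card α - 1)) by simp at hk; linarith, abs_neg] at hgap
    linarith
  · by_contra! hall
    rw [filter_congr fun j _ => and_iff_left_of_imp (hall j), filter_ne,
      card_erase_of_mem (mem_univ i), card_univ, Nat.cast_sub (Fintype.card_pos_iff.mpr ⟨i⟩)] at hk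
    rw [show s - d = a * (Fintype.card α - 1) by push_cast at hk; linarith] at hgap
    linarith

theorem exists_srg_params (hdiag : ∀ i, M i i = d)
    (hoff : ∀ i j, i ≠ j → M i j = a ∨ M i j = -a) (hsymm : M.IsSymm)
    (hrow : ∀ i, ∑ x, M i x = s) (hsq : M * M = m • M) (ha : a ≠ 0)
    (hgap : |s - d| < Fintype.card α - 1) :
    ∃ k lam mu : ℕ,
      ((∀ i, #{j | i ≠ j ∧ M i j = a} = k) ∧
        (∀ i j, i ≠ j → M i j = a →
          #{x | (i ≠ x ∧ M i x = a) ∧ (j ≠ x ∧ M j x = a)} = lam) ∧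
        (∀ i j, i ≠ j → M i j ≠ a →
          #{x | (i ≠ x ∧ M i x = a) ∧ (j ≠ x ∧ M j x = a)} = mu)) ∧
      2 * a * k = s - d + a * (Fintype.card α - 1) ∧
      4 * a * lam = m + 2 * s + Fintype.card α * a - 4 * d - 4 * a ∧
      4 * a * mu = -m + 2 * s + Fintype.card α * a := by
  have hlam : ∀ i j, i ≠ j → M i j = a →
      4 * a * #{x | (i ≠ x ∧ M i x = a) ∧ (j ≠ x ∧ M j x = a)} =
        m + 2 * s + Fintype.card α * a - 4 * d - 4 * a := by
    intro i j hij hadj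
    have h := four_mul_sq_card_common hdiag hoff hsymm hrow hsq hij
    rw [hadj] at h
    exact mul_left_cancel₀ ha (by linear_combination h)
  have hmu : ∀ i j, i ≠ j → M i j ≠ a →
      4 * a * #{x | (i ≠ x ∧ M i x = a) ∧ (j ≠ x ∧ M j x = a)} =
        -m + 2 * s + Fintype.card α * a := by
    intro i j hij hnadj
    have h := four_mul_sq_card_common hdiag hoff hsymm hrow hsq hij
    rw [(hoff i j hij).resolve_left hnadj] at h
    exact mul_left_cancel₀ ha (by linear_combination h)
  have hN : 0 < Fintype.card α := by
    have := abs_nonneg (s - d)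
    omega
  obtain ⟨u⟩ := Fintype.card_pos_iff.mp hN
  -- The gap makes the graph neither empty nor complete, so `lam` and `mu` are both realised.
  obtain ⟨⟨v, huv, hv⟩, ⟨w, huw, hw⟩⟩ := exists_adj_and_not_adj hdiag hoff hrow ha hgap u
  have h2a : 2 * a ≠ 0 := mul_ne_zero two_ne_zero ha
  have h4a : 4 * a ≠ 0 := mul_ne_zero four_ne_zero ha
  refine ⟨_, _, _, ⟨fun i => ?_, fun i j hij hadj => ?_, fun i j hij hnadj => ?_⟩,
    two_mul_card_adj hdiag hoff hrow u, hlam u v huv hv, hmu u w huw hw⟩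
  · exact_mod_cast mul_left_cancel₀ h2a
      ((two_mul_card_adj hdiag hoff hrow i).trans (two_mul_card_adj hdiag hoff hrow u).symm)
  · exact_mod_cast mul_left_cancel₀ h4a ((hlam i j hij hadj).trans (hlam u v huv hv).symm)
  · exact_mod_cast mul_left_cancel₀ h4a ((hmu i j hij hnadj).trans (hmu u w huw hw).symm)

end SignedGram

namespace IsHadamard

variable {n : ℕ} {H : Matrix (Fin n) (Fin n) ℤ}

theorem matrix_isHadamard (hH : _root_.IsHadamard H) : H.IsHadamard := by
  rcases n.eq_zero_or_pos with rfl | hn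
  · exact ⟨fun i => i.elim0, Subsingleton.elim _ _, Subsingleton.elim _ _⟩
  have hT : Hᵀ.IsHadamard := .of_mul_conjTranspose
    (fun i j => Unitary.mem_iff_eq_one_or_eq_neg_one.mpr (hH.1 j i))
    (by simpa [conjTranspose_eq_transpose_of_trivial] using hH.2)
    (IsRegular.of_ne_zero (by simp [hn.ne']))
  simpa using hT.transpose

theorem mul_transpose (hH : _root_.IsHadamard H) : H * Hᵀ = (n : ℤ) • 1 := by
  simpa [conjTranspose_eq_transpose_of_trivial] using hH.matrix_isHadamard.mul_conjTranspose

theorem sum_row_eq_zero (hH : _root_.IsHadamard H) {i₀ : Fin n} (hi₀ : ∀ j, H i₀ j = 1)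
    {r : Fin n} (hr : r ≠ i₀) : ∑ j, H r j = 0 := by
  simpa [mul_apply, hi₀, one_apply, hr] using congr_fun (congr_fun hH.mul_transpose r) i₀

theorem colDot_self (hH : _root_.IsHadamard H) (R : Finset (Fin n)) (i : Fin n) :
    colDot H R i i = R.card := by
  have hsq : ∀ r, H r i * H r i = 1 := fun r => by rcases hH.1 r i with h | h <;> simp [h]
  simp [colDot, hsq]

theorem colDot_mul_colDot (hH : _root_.IsHadamard H) (R : Finset (Fin n)) :
    of (colDot H R) * of (colDot H R) = (n : ℤ) • of (colDot H R) := by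
  set D : Matrix (Fin n) (Fin n) ℤ := diagonal fun r => if r ∈ R then 1 else 0
  have hD : of (colDot H R) = Hᵀ * D * H := by
    ext i j
    simp [colDot, D, mul_apply, diagonal, Finset.sum_ite_mem, mul_comm]
  have hDD : D * D = D := by simp [D, diagonal_mul_diagonal]
  rw [hD]
  calc Hᵀ * D * H * (Hᵀ * D * H) = Hᵀ * D * (H * Hᵀ) * D * H := by
        simp only [Matrix.mul_assoc]
    _ = (n : ℤ) • (Hᵀ * (D * D) * H) := by
        rw [hH.mul_transpose, Matrix.mul_smul, Matrix.mul_one, Matrix.smul_mul, Matrix.smul_mul,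
          Matrix.mul_assoc Hᵀ]
    _ = (n : ℤ) • (Hᵀ * D * H) := by rw [hDD]

theorem sum_colDot (hH : _root_.IsHadamard H) {i₀ : Fin n} (hi₀ : ∀ j, H i₀ j = 1)
    (R : Finset (Fin n)) (i : Fin n) : ∑ x, colDot H R i x = if i₀ ∈ R then (n : ℤ) else 0 := by
  have hpt : ∀ r, H r i * ∑ x, H r x = if r = i₀ then (n : ℤ) else 0 := by
    intro r
    split_ifs with hr
    · simp [hr, hi₀]
    · rw [hH.sum_row_eq_zero hi₀ hr, mul_zero]
  simp only [colDot]
  rw [sum_comm]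
  simp only [← mul_sum, hpt, sum_ite_eq']

end IsHadamard

theorem colDot_isSymm {n : ℕ} (H : Matrix (Fin n) (Fin n) ℤ) (R : Finset (Fin n)) :
    (of (colDot H R)).IsSymm := by
  ext i j
  simp [colDot, mul_comm]

lemma Nat.cast_eq_div_of_mul_eq {x : ℕ} {q p : ℤ} (hq : q ≠ 0) (h : q * x = p) :
    (x : ℚ) = p / q := by
  rw [eq_div_iff (by exact_mod_cast hq), ← h]
  push_cast
  ring

lemma kA_eq_card {n : ℕ} (H : Matrix (Fin n) (Fin n) ℤ) (R : Finset (Fin n)) (a : ℤ) (i : Fin n) :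
    kA H R a i = #{j | i ≠ j ∧ colDot H R i j = a} := by
  simp only [kA, ne_comm]

theorem IsBSHM.exists_associatedGraphIsSRG {n : ℕ} {a s : ℤ} {H : Matrix (Fin n) (Fin n) ℤ}
    {R : Finset (Fin n)} (hB : IsBSHM H R a (-a)) (hR0 : R.card ≠ 0) (hRn : R.card ≠ n)
    (hrow : ∀ i, ∑ x, colDot H R i x = s) (hgap : |s - R.card| < n - 1) :
    (∃ c : ℕ, ∀ i, kA H R a i = c) ∧
    ∃ k lam mu : ℕ, AssociatedGraphIsSRG H R a n k lam mu ∧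
      (k : ℚ) = ((n - 1) * a + s - R.card) / (2 * a) ∧
      (lam : ℚ) = (n - 4) / 4 + (n + 2 * s - 4 * R.card) / (4 * a) ∧
      (mu : ℚ) = (n * (a - 1) + 2 * s) / (4 * a) := by
  have hn : 0 < n := by
    have := abs_nonneg (s - R.card)
    omega
  have : Nonempty (Fin n) := ⟨⟨0, hn⟩⟩
  have hdiag := hB.1.colDot_self R
  have hsq := hB.1.colDot_mul_colDot R
  have ha : a ≠ 0 := ne_zero_of_mul_self_eq_smul (M := of (colDot H R)) hdiag hB.2 hsq
    (by exact_mod_cast hR0) (by exact_mod_cast hRn)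
  obtain ⟨k, lam, mu, ⟨hk, hlam, hmu⟩, hk', hlam', hmu'⟩ :=
    exists_srg_params (M := of (colDot H R)) hdiag hB.2 (colDot_isSymm H R) hrow hsq ha
      (by simpa using hgap)
  simp only [Fintype.card_fin] at hk' hlam' hmu'
  refine ⟨⟨k, fun i => (kA_eq_card H R a i).trans (hk i)⟩, k, lam, mu, ⟨rfl, hk, hlam, hmu⟩,
    ?_, ?_, ?_⟩
  · rw [Nat.cast_eq_div_of_mul_eq (mul_ne_zero two_ne_zero ha) hk']
    push_cast
    ring
  · rw [Nat.cast_eq_div_of_mul_eq (mul_ne_zero four_ne_zero ha) hlam']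
    push_cast
    field_simp
    ring
  · rw [Nat.cast_eq_div_of_mul_eq (mul_ne_zero four_ne_zero ha) hmu']
    push_cast
    ring

theorem stmt5 {n ℓ : ℕ} (a : ℤ) (H : Matrix (Fin n) (Fin n) ℤ)
    (i₀ : Fin n) (hi₀ : ∀ j, H i₀ j = 1)
    (R : Finset (Fin n)) (hRcard : R.card = ℓ) (h1 : 1 < ℓ) (h2 : ℓ < n - 1) :
    (i₀ ∉ R → IsBSHM H R a (-a) →
      (∀ i ∈ R, ∑ j, H i j = 0) ∧
      (∃ c : ℕ, ∀ i : Fin n, kA H R a i = c) ∧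
      (∃ k lam mu : ℕ, AssociatedGraphIsSRG H R a n k lam mu ∧
        (k : ℚ) = (((n : ℚ) - 1) * (a : ℚ) - (ℓ : ℚ)) / (2 * (a : ℚ)) ∧
        (lam : ℚ) = ((n : ℚ) - 4) / 4 + ((n : ℚ) - 4 * (ℓ : ℚ)) / (4 * (a : ℚ)) ∧
        (mu : ℚ) = (n : ℚ) * ((a : ℚ) - 1) / (4 * (a : ℚ)))) ∧
    (i₀ ∈ R → IsBSHM H R a (-a) →
      (∀ i ∈ Rᶜ, ∑ j, H i j = 0) ∧
      (∃ c : ℕ, ∀ i : Fin n, kA H R a i = c) ∧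
      (∃ k lam mu : ℕ, AssociatedGraphIsSRG H R a n k lam mu ∧
        (k : ℚ) = (((n : ℚ) - 1) * (a : ℚ) + (n : ℚ) - (ℓ : ℚ)) / (2 * (a : ℚ)) ∧
        (lam : ℚ) = ((n : ℚ) - 4) / 4 + (3 * (n : ℚ) - 4 * (ℓ : ℚ)) / (4 * (a : ℚ)) ∧
        (mu : ℚ) = (n : ℚ) * ((a : ℚ) + 1) / (4 * (a : ℚ)))) := by
  subst hRcard
  have hR0 : R.card ≠ 0 := by omega
  have hRn : R.card ≠ n := by omega
  constructor
  · intro hi₀R hB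
    obtain ⟨hc, k, lam, mu, hsrg, hk, hlam, hmu⟩ :=
      hB.exists_associatedGraphIsSRG (s := 0) hR0 hRn
      (fun i => by rw [hB.1.sum_colDot hi₀, if_neg hi₀R])
      (by rw [zero_sub, abs_neg, Nat.abs_cast]; omega)
    refine ⟨fun i hi => hB.1.sum_row_eq_zero hi₀ (ne_of_mem_of_not_mem hi hi₀R), hc,
      k, lam, mu, hsrg, ?_, ?_, ?_⟩ <;> simp only [hk, hlam, hmu] <;> push_cast <;> ring
  · intro hi₀R hB
    obtain ⟨hc, k, lam, mu, hsrg, hk, hlam, hmu⟩ :=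
      hB.exists_associatedGraphIsSRG (s := n) hR0 hRn
      (fun i => by rw [hB.1.sum_colDot hi₀, if_pos hi₀R])
      (by rw [abs_of_nonneg (by omega)]; omega)
    refine ⟨fun i hi => hB.1.sum_row_eq_zero hi₀ (ne_of_mem_of_not_mem hi₀R (mem_compl.mp hi)).symm,
      hc, k, lam, mu, hsrg, ?_, ?_, ?_⟩ <;> simp only [hk, hlam, hmu] <;> push_cast <;> ring
end

section
/- Suppose H is a nontrivial BSHM(n,ℓ,a,b) with respect to H₁ (so 1 < ℓ < n−1), with the values a and b both attained. Then: (i) ℓ ≡ a ≡ b (mod 2); (ii) ℓ ≡ a (mod 4) or ℓ ≡ b (mod 4). -/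
open Matrix

/-! For `±1` entries, `u v ≡ 1 (mod 2)` and `u v + v w ≡ 1 + u w (mod 4)`, the latter since
`1 - u v - v w + u w = (1 - u v)(1 - v w)` is a product of two elements of `{0, 2}`.
Summing over the `ℓ` rows of `H₁`, every column dot product `x_jk` satisfies `x_jk ≡ ℓ (mod 2)`,
and any three columns satisfy `x_jk + x_km ≡ ℓ + x_jm (mod 4)`. For three distinct columns these
dot products lie in `{a, b}`, and as `a ≡ b ≡ ℓ (mod 2)` each assignment forces `ℓ ≡ a` or
`ℓ ≡ b (mod 4)`. -/

section SignVectors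

variable {ι : Type*} (s : Finset ι) {u v w : ι → ℤ}

theorem Int.card_modEq_two_sum_mul_of_sign (hu : ∀ i ∈ s, u i = 1 ∨ u i = -1)
    (hv : ∀ i ∈ s, v i = 1 ∨ v i = -1) : (s.card : ℤ) ≡ ∑ i ∈ s, u i * v i [ZMOD 2] := by
  rw [Finset.card_eq_sum_ones, Nat.cast_sum, Nat.cast_one]
  refine Int.ModEq.sum fun i hi => ?_
  rcases hu i hi with h | h <;> rcases hv i hi with h' | h' <;> simp [h, h'] <;> decide

theorem Int.sum_mul_add_sum_mul_modEq_four_of_sign (hu : ∀ i ∈ s, u i = 1 ∨ u i = -1)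
    (hv : ∀ i ∈ s, v i = 1 ∨ v i = -1) (hw : ∀ i ∈ s, w i = 1 ∨ w i = -1) :
    ∑ i ∈ s, u i * v i + ∑ i ∈ s, v i * w i ≡ s.card + ∑ i ∈ s, u i * w i [ZMOD 4] := by
  rw [Finset.card_eq_sum_ones, Nat.cast_sum, Nat.cast_one, ← Finset.sum_add_distrib,
    ← Finset.sum_add_distrib]
  refine Int.ModEq.sum fun i hi => ?_
  rcases hu i hi with h | h <;> rcases hv i hi with h' | h' <;> rcases hw i hi with h'' | h'' <;>
    simp [h, h', h''] <;> decide

end SignVectors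

section ColDot

variable {n : ℕ} {H : Matrix (Fin n) (Fin n) ℤ} (R : Finset (Fin n))

theorem card_modEq_two_colDot (hH : ∀ i j, H i j = 1 ∨ H i j = -1) (j k : Fin n) :
    (R.card : ℤ) ≡ colDot H R j k [ZMOD 2] :=
  Int.card_modEq_two_sum_mul_of_sign R (fun i _ => hH i j) (fun i _ => hH i k)

theorem colDot_add_colDot_modEq_four (hH : ∀ i j, H i j = 1 ∨ H i j = -1) (j k m : Fin n) :
    colDot H R j k + colDot H R k m ≡ R.card + colDot H R j m [ZMOD 4] :=
  Int.sum_mul_add_sum_mul_modEq_four_of_sign R (fun i _ => hH i j) (fun i _ => hH i k)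
    (fun i _ => hH i m)

end ColDot

theorem Int.modEq_four_of_mem_pair_of_add_modEq {ℓ a b x y z : ℤ}
    (ha : ℓ ≡ a [ZMOD 2]) (hb : ℓ ≡ b [ZMOD 2])
    (hx : x = a ∨ x = b) (hy : y = a ∨ y = b) (hz : z = a ∨ z = b)
    (hxyz : x + y ≡ ℓ + z [ZMOD 4]) : ℓ ≡ a [ZMOD 4] ∨ ℓ ≡ b [ZMOD 4] := by
  simp only [Int.ModEq] at *
  rcases hx with rfl | rfl <;> rcases hy with rfl | rfl <;> rcases hz with rfl | rfl <;> omega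

theorem stmt8 {n ℓ : ℕ} (a b : ℤ) (H : Matrix (Fin n) (Fin n) ℤ)
    (R : Finset (Fin n)) (hRcard : R.card = ℓ) (h1 : 1 < ℓ) (h2 : ℓ < n - 1)
    (hbshm : IsBSHM H R a b)
    (haAtt : ∃ j k, j ≠ k ∧ colDot H R j k = a)
    (hbAtt : ∃ j k, j ≠ k ∧ colDot H R j k = b) :
    (Int.ModEq 2 (ℓ : ℤ) a ∧ Int.ModEq 2 a b) ∧
    (Int.ModEq 4 (ℓ : ℤ) a ∨ Int.ModEq 4 (ℓ : ℤ) b) := by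
  obtain ⟨⟨hH, -⟩, hval⟩ := hbshm
  obtain ⟨j, k, -, rfl⟩ := haAtt
  obtain ⟨j', k', -, rfl⟩ := hbAtt
  subst hRcard
  have ha := card_modEq_two_colDot R hH j k
  have hb := card_modEq_two_colDot R hH j' k'
  refine ⟨⟨ha, ha.symm.trans hb⟩, ?_⟩
  let c₀ : Fin n := ⟨0, by omega⟩
  let c₁ : Fin n := ⟨1, by omega⟩
  let c₂ : Fin n := ⟨2, by omega⟩
  exact Int.modEq_four_of_mem_pair_of_add_modEq ha hb
    (hval c₀ c₁ (by simp [c₀, c₁, Fin.ext_iff])) (hval c₁ c₂ (by simp [c₁, c₂, Fin.ext_iff]))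
    (hval c₀ c₂ (by simp [c₀, c₂, Fin.ext_iff])) (colDot_add_colDot_modEq_four R hH c₀ c₁ c₂)
end

section
/- Let r ≥ 1, let G = (ℤ/2ℤ)^r, and for g, s ∈ G let χ_g(s) = (−1)^{⟨g,s⟩} ∈ {1,−1}, where ⟨g,s⟩ is obtained by summing over the integers the products of corresponding coordinates of g and s taken as 0/1 representatives. Let C(G) be the 2^r × 2^r integer matrix with rows indexed by s ∈ G and columns indexed by g ∈ G whose (s,g) entry is χ_g(s), and for a subset D ⊆ G let C(D) be the |D| × 2^r submatrix of C(G) whose rows are indexed by the elements of D. Let D ⊆ G with |D| = ℓ, 1 ≤ ℓ ≤ 2^r − 1, and let a, b be integers. Then C(G) is a Hadamard matrix of order 2^r containing the all-ones row, and the following are equivalent: (i) the dot product of every two distinct columns of C(D) lies in {a,b} (i.e., C(G) is a BSHM(2^r,ℓ,a,b) with respect to C(D)); (ii) there exist nonnegative integers α and β such that D is a (2^r, ℓ, α, β) partial difference set in G, and additionally the character sum χ_g(D) := Σ_{d∈D} χ_g(d) lies in {a,b} for every nonzero g ∈ G. -/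
open Matrix Finset

/-- The character-table matrix of `(ℤ/2ℤ)^r`: the `(s, g)` entry is
`χ_g(s) = (-1)^{⟨g,s⟩}`, where `⟨g,s⟩` is the sum over `ℤ` of the products of the
`0/1` representatives of the coordinates. -/
def charTable (r : ℕ) : Matrix (Fin r → ZMod 2) (Fin r → ZMod 2) ℤ :=
  fun s g => (-1 : ℤ) ^ (∑ i, (g i).val * (s i).val)

/-- The number of ordered pairs `(x, y)` of distinct elements of `D` with `x - y = d`. -/
def diffCount {r : ℕ} (D : Finset (Fin r → ZMod 2)) (d : Fin r → ZMod 2) : ℕ :=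
  ((D ×ˢ D).filter fun p => p.1 ≠ p.2 ∧ p.1 - p.2 = d).card

/-!
The entries of the character table are the Walsh characters `χ_g(s) = (-1)^{g ⬝ s}`, so the
product of columns `g` and `h` of `C(D)` is the character sum `χ_{g+h}(D)`, and `g + h` runs over
the nonzero elements exactly when `g ≠ h`: condition (i) says that `χ_g(D) ∈ {a, b}` for `g ≠ 0`.
For the difference counts, Fourier inversion gives
`2^r · #{(x, y) ∈ D² | x + y = d} = ∑_g χ_g(d) χ_g(D)²`. Writing
`S² = (a + b) S - a b + (S - a)(S - b)`, where the last term vanishes at every `g ≠ 0`, the right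
side is `(a + b) 2^r [d ∈ D] + (|D| - a)(|D| - b)` for `d ≠ 0`, which depends on `d` only through
whether `d ∈ D`.
-/

def ZMod.signChar : AddChar (ZMod 2) ℤ where
  toFun x := (-1) ^ x.val
  map_zero_eq_one' := rfl
  map_add_eq_mul' := by decide

theorem CharTwo.pi_add_eq_zero {ι R : Type*} [Ring R] [CharP R 2] {g h : ι → R} :
    g + h = 0 ↔ g = h := by
  simp only [funext_iff, Pi.add_apply, Pi.zero_apply, CharTwo.add_eq_zero]

section Walsh

variable {ι : Type*} [Fintype ι]

def walshChar (g : ι → ZMod 2) : AddChar (ι → ZMod 2) ℤ :=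
  ZMod.signChar.compAddMonoidHom (AddMonoidHom.mk' (g ⬝ᵥ ·) (dotProduct_add g))

theorem walshChar_apply (g s : ι → ZMod 2) : walshChar g s = (-1) ^ (g ⬝ᵥ s).val := rfl

theorem walshChar_comm (g s : ι → ZMod 2) : walshChar g s = walshChar s g := by
  rw [walshChar_apply, walshChar_apply, dotProduct_comm]

@[simp]
theorem walshChar_zero_left (s : ι → ZMod 2) : walshChar 0 s = 1 := by
  simp [walshChar_apply]

theorem walshChar_add_left (g h s : ι → ZMod 2) :
    walshChar (g + h) s = walshChar g s * walshChar h s := by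
  rw [walshChar_comm, AddChar.map_add_eq_mul, walshChar_comm g, walshChar_comm h]

theorem walshChar_eq_zero_iff [DecidableEq ι] {g : ι → ZMod 2} : walshChar g = 0 ↔ g = 0 := by
  refine ⟨fun hg => funext fun i => ?_, fun hg => by ext; simp [hg]⟩
  rw [Pi.zero_apply]
  by_contra hgi
  have hgi : g i = 1 := by revert hgi; generalize g i = x; revert x; decide
  have := congrArg (· (Pi.single i 1)) hg
  simp [walshChar_apply, dotProduct_single, hgi, ZMod.val_one] at this

theorem sum_walshChar [DecidableEq ι] (g : ι → ZMod 2) :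
    ∑ s, walshChar g s = if g = 0 then (2 : ℤ) ^ Fintype.card ι else 0 := by
  simp [AddChar.sum_eq_ite, walshChar_eq_zero_iff]

theorem sum_walshChar_left [DecidableEq ι] (s : ι → ZMod 2) :
    ∑ g, walshChar g s = if s = 0 then (2 : ℤ) ^ Fintype.card ι else 0 := by
  simp only [walshChar_comm _ s, sum_walshChar]

theorem sum_walshChar_mul_sum [DecidableEq ι] {α : Type*} (s : Finset α) (f : α → ι → ZMod 2)
    (d : ι → ZMod 2) :
    ∑ g, walshChar g d * ∑ x ∈ s, walshChar g (f x)
      = 2 ^ Fintype.card ι * #{x ∈ s | f x = d} := by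
  simp only [mul_sum, ← AddChar.map_add_eq_mul]
  rw [sum_comm, card_filter, Nat.cast_sum, mul_sum]
  refine sum_congr rfl fun x _ => ?_
  simp [sum_walshChar_left, CharTwo.pi_add_eq_zero, eq_comm]

variable (D : Finset (ι → ZMod 2))

def charSum (g : ι → ZMod 2) : ℤ := ∑ d ∈ D, walshChar g d

@[simp]
theorem charSum_zero : charSum D 0 = #D := by
  simp [charSum]

theorem sum_walshChar_mul_charSum [DecidableEq ι] (d : ι → ZMod 2) :
    ∑ g, walshChar g d * charSum D g = if d ∈ D then 2 ^ Fintype.card ι else 0 := by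
  simpa [charSum, filter_eq', apply_ite] using sum_walshChar_mul_sum D id d

theorem sum_walshChar_mul_charSum_sq [DecidableEq ι] (d : ι → ZMod 2) :
    ∑ g, walshChar g d * charSum D g ^ 2
      = 2 ^ Fintype.card ι * #{p ∈ D ×ˢ D | p.1 + p.2 = d} := by
  rw [← sum_walshChar_mul_sum (D ×ˢ D) (fun p => p.1 + p.2) d]
  simp only [charSum, sq, sum_mul_sum, ← sum_product', AddChar.map_add_eq_mul]

theorem two_pow_mul_card_add_eq_of_charSum_mem [DecidableEq ι] {a b : ℤ}
    (hab : ∀ g ≠ 0, charSum D g = a ∨ charSum D g = b) {d : ι → ZMod 2} (hd : d ≠ 0) :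
    2 ^ Fintype.card ι * (#{p ∈ D ×ˢ D | p.1 + p.2 = d} : ℤ)
      = (a + b) * (if d ∈ D then 2 ^ Fintype.card ι else 0) + (#D - a) * (#D - b) := by
  have hquad : ∀ g, walshChar g d * charSum D g ^ 2
      = (a + b) * (walshChar g d * charSum D g) - a * b * walshChar g d
        + walshChar g d * ((charSum D g - a) * (charSum D g - b)) := fun g => by ring
  -- `(S - a)(S - b)` vanishes on every nontrivial character, leaving only `g = 0`
  have hzero : ∑ g, walshChar g d * ((charSum D g - a) * (charSum D g - b))
      = (#D - a) * (#D - b) := by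
    rw [Fintype.sum_eq_single 0 fun g hg => by rcases hab g hg with h | h <;> simp [h]]
    simp
  rw [← sum_walshChar_mul_charSum_sq, sum_congr rfl fun g _ => hquad g, sum_add_distrib,
    sum_sub_distrib, ← mul_sum, ← mul_sum, sum_walshChar_mul_charSum, sum_walshChar_left,
    if_neg hd, hzero]
  ring

end Walsh

theorem exists_forall_eq_of_forall_eq {α β : Type*} [Nonempty β] {p : α → Prop} {f : α → β}
    (h : ∀ x, p x → ∀ y, p y → f x = f y) : ∃ c, ∀ x, p x → f x = c := by
  by_cases hp : ∃ x, p x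
  · obtain ⟨x, hx⟩ := hp
    exact ⟨f x, fun y hy => h y hy x hx⟩
  · exact ⟨Classical.arbitrary β, fun x hx => (hp ⟨x, hx⟩).elim⟩

section CharTable

variable {r : ℕ}

theorem charTable_eq_walshChar (s g : Fin r → ZMod 2) : charTable r s g = walshChar g s := by
  rw [charTable, walshChar_apply, neg_one_pow_eq_pow_mod_two, ← ZMod.val_natCast]
  push_cast
  simp [ZMod.natCast_val, dotProduct]

theorem charTable_eq_one_or_neg_one (s g : Fin r → ZMod 2) :
    charTable r s g = 1 ∨ charTable r s g = -1 :=
  neg_one_pow_eq_or ℤ _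

theorem transpose_charTable_mul_self :
    (charTable r)ᵀ * charTable r = ((2 ^ r : ℕ) : ℤ) • 1 := by
  ext g h
  simp only [mul_apply, transpose_apply, charTable_eq_walshChar, ← walshChar_add_left,
    sum_walshChar, CharTwo.pi_add_eq_zero, Matrix.smul_apply, Matrix.one_apply]
  split_ifs <;> simp

theorem charTable_zero_left (g : Fin r → ZMod 2) : charTable r 0 g = 1 := by
  simp [charTable]

variable (D : Finset (Fin r → ZMod 2))

theorem sum_charTable (g : Fin r → ZMod 2) : ∑ d ∈ D, charTable r d g = charSum D g := by
  simp only [charTable_eq_walshChar, charSum]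

theorem sum_charTable_mul_charTable (g h : Fin r → ZMod 2) :
    ∑ d ∈ D, charTable r d g * charTable r d h = charSum D (g + h) := by
  simp only [charTable_eq_walshChar, charSum, walshChar_add_left]

theorem diffCount_eq_card_add_eq {d : Fin r → ZMod 2} (hd : d ≠ 0) :
    diffCount D d = #{p ∈ D ×ˢ D | p.1 + p.2 = d} := by
  have hsub : ∀ x y : Fin r → ZMod 2, x - y = x + y :=
    fun x y => funext fun i => CharTwo.sub_eq_add (x i) (y i)
  refine congrArg card (filter_congr fun p _ => ?_)
  rw [hsub, and_iff_right_iff_imp]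
  rintro rfl hp
  exact hd (CharTwo.pi_add_eq_zero.2 hp)

theorem diffCount_eq_of_mem_iff {a b : ℤ} (hab : ∀ g ≠ 0, charSum D g = a ∨ charSum D g = b)
    {d d' : Fin r → ZMod 2} (hd : d ≠ 0) (hd' : d' ≠ 0) (hmem : d ∈ D ↔ d' ∈ D) :
    diffCount D d = diffCount D d' := by
  have h := two_pow_mul_card_add_eq_of_charSum_mem D hab hd
  rw [if_congr hmem rfl rfl, ← two_pow_mul_card_add_eq_of_charSum_mem D hab hd'] at h
  rw [diffCount_eq_card_add_eq D hd, diffCount_eq_card_add_eq D hd']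
  exact_mod_cast mul_left_cancel₀ (by positivity) h

theorem exists_diffCount_eq_of_charSum_mem {a b : ℤ}
    (hab : ∀ g ≠ 0, charSum D g = a ∨ charSum D g = b) :
    ∃ α β : ℕ, (∀ d ∈ D, d ≠ 0 → diffCount D d = α) ∧
      (∀ d : Fin r → ZMod 2, d ∉ D → d ≠ 0 → diffCount D d = β) := by
  obtain ⟨α, hα⟩ := exists_forall_eq_of_forall_eq (p := fun d => d ∈ D ∧ d ≠ 0)
    fun x hx y hy => diffCount_eq_of_mem_iff D hab hx.2 hy.2 (iff_of_true hx.1 hy.1)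
  obtain ⟨β, hβ⟩ := exists_forall_eq_of_forall_eq (p := fun d => d ∉ D ∧ d ≠ 0)
    fun x hx y hy => diffCount_eq_of_mem_iff D hab hx.2 hy.2 (iff_of_false hx.1 hy.1)
  exact ⟨α, β, fun d hd hd0 => hα d ⟨hd, hd0⟩, fun d hd hd0 => hβ d ⟨hd, hd0⟩⟩

end CharTable

theorem stmt14_general {r : ℕ} (a b : ℤ)
    (D : Finset (Fin r → ZMod 2)) :
    -- `C((ℤ/2ℤ)^r)` is a Hadamard matrix of order `2^r` containing the all-ones row
    ((∀ s g, charTable r s g = 1 ∨ charTable r s g = -1) ∧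
     (charTable r)ᵀ * charTable r = ((2 ^ r : ℕ) : ℤ) • 1 ∧
     (∃ s₀, ∀ g, charTable r s₀ g = 1)) ∧
    -- the equivalence
    ((∀ g h : Fin r → ZMod 2, g ≠ h →
        (∑ d ∈ D, charTable r d g * charTable r d h) = a ∨
        (∑ d ∈ D, charTable r d g * charTable r d h) = b)
      ↔
     ((∃ α β : ℕ,
        (∀ d ∈ D, d ≠ 0 → diffCount D d = α) ∧
        (∀ d : Fin r → ZMod 2, d ∉ D → d ≠ 0 → diffCount D d = β)) ∧
      (∀ g : Fin r → ZMod 2, g ≠ 0 →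
        (∑ d ∈ D, charTable r d g) = a ∨ (∑ d ∈ D, charTable r d g) = b))) := by
  refine ⟨⟨charTable_eq_one_or_neg_one, transpose_charTable_mul_self, 0, charTable_zero_left⟩, ?_⟩
  simp only [sum_charTable_mul_charTable, sum_charTable]
  constructor
  · intro hcols
    have hab : ∀ g ≠ 0, charSum D g = a ∨ charSum D g = b := fun g hg => by
      simpa using hcols g 0 hg
    exact ⟨exists_diffCount_eq_of_charSum_mem D hab, hab⟩
  · rintro ⟨-, hab⟩ g h hgh
    exact hab (g + h) (mt CharTwo.pi_add_eq_zero.1 hgh)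

theorem stmt14 {r ℓ : ℕ} (hr : 1 ≤ r) (a b : ℤ)
    (hℓ1 : 1 ≤ ℓ) (hℓ2 : ℓ ≤ 2 ^ r - 1)
    (D : Finset (Fin r → ZMod 2)) (hD : D.card = ℓ) :
    -- `C((ℤ/2ℤ)^r)` is a Hadamard matrix of order `2^r` containing the all-ones row
    ((∀ s g, charTable r s g = 1 ∨ charTable r s g = -1) ∧
     (charTable r)ᵀ * charTable r = ((2 ^ r : ℕ) : ℤ) • 1 ∧
     (∃ s₀, ∀ g, charTable r s₀ g = 1)) ∧
    -- the equivalence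
    ((∀ g h : Fin r → ZMod 2, g ≠ h →
        (∑ d ∈ D, charTable r d g * charTable r d h) = a ∨
        (∑ d ∈ D, charTable r d g * charTable r d h) = b)
      ↔
     ((∃ α β : ℕ,
        (∀ d ∈ D, d ≠ 0 → diffCount D d = α) ∧
        (∀ d : Fin r → ZMod 2, d ∉ D → d ≠ 0 → diffCount D d = β)) ∧
      (∀ g : Fin r → ZMod 2, g ≠ 0 →
        (∑ d ∈ D, charTable r d g) = a ∨ (∑ d ∈ D, charTable r d g) = b))) :=
  stmt14_general a b D
end
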